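/- arXiv:math/0101183 — 4 statements merged into one kernel-verified Lean document; each statement's English description precedes it below -/
import Mathlib

section
/- Let r be a positive integer, q a real number with q > 1, \gamma a nonzero real number, and c_1, ..., c_r real numbers. Define P(t) = 1 + \sum_{i=1}^{r-1} c_i t^i + c_r t^r + \sum_{i=1}^{r-1} c_i q^{r-i} t^{2r-i} + q^r t^{2r} and Z(t) = \gamma P(t)/((1-t^r)(1-q^r t^r)). Then for every nonzero real t with t^r \ne 1, q^r t^r \ne 1, (q t)^r \ne 1 and q^r \ne (q t)^r (i.e. both denominators are nonzero), one has Z(1/(q t)) = Z(t). (Combined with the Fundamental Identity Z_{E,r,F_q}(t) = \gamma_{E,r}(0) P_{E,r,F_q}(t)/((1-t^r)(1-q^r t^r)), this is the functional equation \zeta_{E,r,F_q}(s) = \zeta_{E,r,F_q}(1-s) of Theorem 3.1.2(2), since t = q^{-s} and s \mapsto 1-s corresponds to t \mapsto 1/(qt).) -/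
/-!
Put `u = 1/(qt)` and `K = q^r t^(2r)`. Multiplying by `K` sends the monomial `t^i` of `P(u)` to
`q^(r-i) t^(2r-i)` and back, so the coefficient pattern of `P` (palindromic up to the weights
`q^(r-i)`) gives `P(u) K = P(t)`. The denominator transforms the same way,
`(1 - u^r)(1 - q^r u^r) K = (1 - t^r)(1 - q^r t^r)`, so `K` cancels in `Z(u)`.
-/

open Finset

section FunctionalEquation

variable {F : Type*} [Field F]

def zetaNumerator (r : ℕ) (q : F) (c : ℕ → F) (t : F) : F :=
  1 + (∑ i ∈ Icc 1 (r - 1), c i * t ^ i) + c r * t ^ r +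
    (∑ i ∈ Icc 1 (r - 1), c i * q ^ (r - i) * t ^ (2 * r - i)) + q ^ r * t ^ (2 * r)

lemma inv_mul_pow_mul_pow_mul_pow {q t : F} (hq : q ≠ 0) (ht : t ≠ 0) {i m n : ℕ}
    (him : i ≤ m) (hin : i ≤ n) :
    (q * t)⁻¹ ^ i * (q ^ m * t ^ n) = q ^ (m - i) * t ^ (n - i) := by
  rw [← pow_sub_mul_pow q him, ← pow_sub_mul_pow t hin, inv_pow, mul_pow]
  field_simp

lemma zetaNumerator_inv_mul {q t : F} (hq : q ≠ 0) (ht : t ≠ 0) (r : ℕ) (c : ℕ → F) :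
    zetaNumerator r q c (q * t)⁻¹ * (q ^ r * t ^ (2 * r)) = zetaNumerator r q c t := by
  have key {i m n : ℕ} (him : i ≤ m) (hin : i ≤ n) :=
    inv_mul_pow_mul_pow_mul_pow hq ht him hin
  have low : ∑ i ∈ Icc 1 (r - 1), c i * (q * t)⁻¹ ^ i * (q ^ r * t ^ (2 * r)) =
      ∑ i ∈ Icc 1 (r - 1), c i * q ^ (r - i) * t ^ (2 * r - i) := by
    refine sum_congr rfl fun i hi => ?_
    have hir : i ≤ r := by grind
    rw [mul_assoc, key hir (by omega), mul_assoc]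
  have high : ∑ i ∈ Icc 1 (r - 1),
      c i * q ^ (r - i) * (q * t)⁻¹ ^ (2 * r - i) * (q ^ r * t ^ (2 * r)) =
      ∑ i ∈ Icc 1 (r - 1), c i * t ^ i := by
    refine sum_congr rfl fun i hi => ?_
    have hir : i ≤ r := by grind
    have hq' : q ^ (r - i) * q ^ r = q ^ (2 * r - i) := by rw [← pow_add]; congr 1; omega
    calc c i * q ^ (r - i) * (q * t)⁻¹ ^ (2 * r - i) * (q ^ r * t ^ (2 * r))
        = c i * ((q * t)⁻¹ ^ (2 * r - i) * (q ^ (2 * r - i) * t ^ (2 * r))) := by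
          rw [← hq']; ring
      _ = c i * t ^ i := by
          rw [key le_rfl (by omega), Nat.sub_self, pow_zero, one_mul]
          congr 2
          omega
  have middle : (q * t)⁻¹ ^ r * (q ^ r * t ^ (2 * r)) = t ^ r := by
    rw [key le_rfl (by omega), Nat.sub_self, pow_zero, one_mul]; congr 1; omega
  have top : q ^ r * (q * t)⁻¹ ^ (2 * r) * (q ^ r * t ^ (2 * r)) = 1 := by
    rw [inv_pow, mul_pow]; field_simp; ring
  simp only [zetaNumerator, add_mul, sum_mul, low, high, mul_assoc (c r), middle, top]
  ring

def zetaDenominator (r : ℕ) (q t : F) : F := (1 - t ^ r) * (1 - q ^ r * t ^ r)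

lemma zetaDenominator_inv_mul {q t : F} (hq : q ≠ 0) (ht : t ≠ 0) (r : ℕ) :
    zetaDenominator r q (q * t)⁻¹ * (q ^ r * t ^ (2 * r)) = zetaDenominator r q t := by
  have hqr : q ^ r ≠ 0 := pow_ne_zero r hq
  have htr : t ^ r ≠ 0 := pow_ne_zero r ht
  rw [zetaDenominator, zetaDenominator, inv_pow, mul_pow, mul_comm 2 r, pow_mul]
  field_simp
  ring

-- At a pole both denominators vanish together, so both sides are the junk value `0`.
theorem zeta_functional_equation {q t : F} (hq : q ≠ 0) (ht : t ≠ 0) (r : ℕ) (γ : F)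
    (c : ℕ → F) :
    γ * zetaNumerator r q c (q * t)⁻¹ / zetaDenominator r q (q * t)⁻¹ =
      γ * zetaNumerator r q c t / zetaDenominator r q t := by
  have hK : q ^ r * t ^ (2 * r) ≠ 0 := by positivity
  rw [← mul_div_mul_right _ _ hK, mul_assoc, zetaNumerator_inv_mul hq ht,
    zetaDenominator_inv_mul hq ht]

end FunctionalEquation

open Finset in
theorem stmt_6_general (r : ℕ) (q : ℝ) (hq : 1 < q) (γ : ℝ)
    (c : ℕ → ℝ) (P Z : ℝ → ℝ)
    (hP : ∀ t : ℝ, P t =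
      1 + (∑ i ∈ Finset.Icc 1 (r - 1), c i * t ^ i) + c r * t ^ r +
        (∑ i ∈ Finset.Icc 1 (r - 1), c i * q ^ (r - i) * t ^ (2 * r - i)) +
        q ^ r * t ^ (2 * r))
    (hZ : ∀ t : ℝ, Z t = γ * P t / ((1 - t ^ r) * (1 - q ^ r * t ^ r))) :
    ∀ t : ℝ, t ≠ 0 → t ^ r ≠ 1 → q ^ r * t ^ r ≠ 1 → (q * t) ^ r ≠ 1 →
      q ^ r ≠ (q * t) ^ r → Z (1 / (q * t)) = Z t := by
  intro t ht _ _ _ _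
  have hP' : P = zetaNumerator r q c := funext hP
  rw [hZ, hZ, hP', one_div]
  exact zeta_functional_equation (by positivity) ht r γ c

open Finset in
/-- The functional equation Z(1/(qt)) = Z(t) for the rank-r non-abelian local zeta
function of an elliptic curve (Theorem 3.1.2(2): ζ_{E,r,F_q}(s) = ζ_{E,r,F_q}(1-s)). -/
theorem stmt_6 (r : ℕ) (hr : 0 < r) (q : ℝ) (hq : 1 < q) (γ : ℝ) (hγ : γ ≠ 0)
    (c : ℕ → ℝ) (P Z : ℝ → ℝ)
    (hP : ∀ t : ℝ, P t =
      1 + (∑ i ∈ Finset.Icc 1 (r - 1), c i * t ^ i) + c r * t ^ r +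
        (∑ i ∈ Finset.Icc 1 (r - 1), c i * q ^ (r - i) * t ^ (2 * r - i)) +
        q ^ r * t ^ (2 * r))
    (hZ : ∀ t : ℝ, Z t = γ * P t / ((1 - t ^ r) * (1 - q ^ r * t ^ r))) :
    ∀ t : ℝ, t ≠ 0 → t ^ r ≠ 1 → q ^ r * t ^ r ≠ 1 → (q * t) ^ r ≠ 1 →
      q ^ r ≠ (q * t) ^ r → Z (1 / (q * t)) = Z t :=
  stmt_6_general r q hq γ c P Z hP hZ
end

section
/- For every real number s > 2, the infinite product over all primes p \ge 3 of the factors (1 + (p-1) p^{-s} + (2p-4) p^{-2s} + (p^2-p) p^{-3s} + p^2 p^{-4s})^{-1} converges (the family of factors indexed by primes p \ge 3 is multipliable). This is the rank-2 global non-abelian zeta function E_2(s) = \prod_{p \ge 3 prime} (1 + (p-1)p^{-s} + (2p-4)p^{-2s} + (p^2-p)p^{-3s} + p^2 p^{-4s})^{-1} over Q, and it converges for Re(s) > 2. -/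
/-!
With `t = p ^ (-s)` the Euler factor is `P(p, t)⁻¹`, where `P` is the rank-2 local numerator.
For `q ≥ 2` and `q t ≤ 1` one has `0 ≤ P(q, t) - 1 ≤ 5 q t`, so the factors are `(1 + a_p)⁻¹` with
`0 ≤ a_p ≤ 5 p ^ (1 - s)`, summable for `s > 2`; the product then converges because its
logarithms `-log (1 + a_p)` are summable.
-/

open Real Function

/-- The rank-2 local numerator `P_{E,2,𝔽_q}(t)` of Proposition 4.1.1. -/
def rank2Numerator (q t : ℝ) : ℝ :=
  1 + (q - 1) * t + (2 * q - 4) * t ^ 2 + (q ^ 2 - q) * t ^ 3 + q ^ 2 * t ^ 4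

lemma rank2Numerator_sub_one_nonneg {q t : ℝ} (hq : 2 ≤ q) (ht : 0 ≤ t) :
    0 ≤ rank2Numerator q t - 1 := by
  have h1 : 0 ≤ (q - 1) * t := mul_nonneg (by linarith) ht
  have h2 : 0 ≤ (2 * q - 4) * t ^ 2 := mul_nonneg (by linarith) (by positivity)
  have h3 : 0 ≤ (q ^ 2 - q) * t ^ 3 := mul_nonneg (by nlinarith) (by positivity)
  have h4 : 0 ≤ q ^ 2 * t ^ 4 := by positivity
  unfold rank2Numerator
  linarith

lemma rank2Numerator_sub_one_le {q t : ℝ} (hq : 1 ≤ q) (ht : 0 ≤ t) (hqt : q * t ≤ 1) :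
    rank2Numerator q t - 1 ≤ 5 * (q * t) := by
  have ht1 : t ≤ 1 := by nlinarith
  have hqt0 : 0 ≤ q * t := by positivity
  have h2 : (2 * q - 4) * t ^ 2 ≤ 2 * (q * t) := by nlinarith [mul_le_mul_of_nonneg_left ht1 hqt0]
  have hqtt : q * t * t ≤ 1 := mul_le_one₀ hqt ht ht1
  have h3 : (q ^ 2 - q) * t ^ 3 ≤ q * t := by
    nlinarith [mul_le_mul_of_nonneg_left hqtt hqt0, pow_nonneg ht 3]
  have h4 : q ^ 2 * t ^ 4 ≤ q * t := by
    nlinarith [mul_le_mul_of_nonneg_left (mul_le_one₀ hqtt (by positivity) ht1) hqt0]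
  unfold rank2Numerator
  nlinarith

lemma rpow_neg_natCast_mul {x : ℝ} (hx : 0 ≤ x) (n : ℕ) (s : ℝ) :
    x ^ (-(n * s)) = (x ^ (-s)) ^ n := by
  rw [← rpow_mul_natCast hx, neg_mul_eq_mul_neg, mul_comm]

lemma summable_rank2Numerator_sub_one {ι : Type*} {v : ι → ℕ} (hv : Injective v)
    (hv2 : ∀ i, 2 ≤ v i) {s : ℝ} (hs : 2 < s) :
    Summable fun i => rank2Numerator (v i) ((v i : ℝ) ^ (-s)) - 1 := by
  have hpow : Summable fun i => ((v i : ℝ) ^ (1 - s)) :=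
    (summable_nat_rpow.mpr (by linarith)).comp_injective hv
  refine .of_nonneg_of_le (fun i => rank2Numerator_sub_one_nonneg (by exact_mod_cast hv2 i)
    (by positivity)) (fun i => ?_) (hpow.mul_left 5)
  have hx : (1 : ℝ) ≤ v i := by exact_mod_cast (hv2 i).trans' one_le_two
  have hxt : (v i : ℝ) * (v i : ℝ) ^ (-s) = (v i : ℝ) ^ (1 - s) := by
    rw [sub_eq_add_neg, rpow_add (by positivity), rpow_one]
  rw [← hxt]
  exact rank2Numerator_sub_one_le hx (by positivity)
    (hxt ▸ rpow_le_one_of_one_le_of_nonpos hx (by linarith))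

lemma Real.multipliable_inv_one_add_of_summable {ι : Type*} {f : ι → ℝ} (hf : Summable f) :
    Multipliable fun i => (1 + f i)⁻¹ := by
  refine multipliable_of_summable_log' ?_ ?_
  · filter_upwards [hf.tendsto_cofinite_zero.eventually_const_lt neg_one_lt_zero] with i hi
    exact inv_pos.mpr (by linarith)
  · simpa only [log_inv] using (summable_log_one_add_of_summable hf).neg

/-- Convergence for Re(s) > 2 of the rank-2 global non-abelian zeta function
E₂(s) = ∏_{p ≥ 3 prime} (1 + (p-1)p^{-s} + (2p-4)p^{-2s} + (p²-p)p^{-3s} + p²p^{-4s})⁻¹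
over ℚ. -/
theorem stmt_7 (s : ℝ) (hs : 2 < s) :
    Multipliable fun p : {p : ℕ // Nat.Prime p ∧ 3 ≤ p} =>
      (1 + ((p.1 : ℝ) - 1) * (p.1 : ℝ) ^ (-s) + (2 * (p.1 : ℝ) - 4) * (p.1 : ℝ) ^ (-(2 * s)) +
          ((p.1 : ℝ) ^ 2 - (p.1 : ℝ)) * (p.1 : ℝ) ^ (-(3 * s)) +
          (p.1 : ℝ) ^ 2 * (p.1 : ℝ) ^ (-(4 * s)))⁻¹ := by
  have hsum := summable_rank2Numerator_sub_one Subtype.val_injective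
    (fun p : {p : ℕ // Nat.Prime p ∧ 3 ≤ p} => p.2.1.two_le) hs
  refine (Real.multipliable_inv_one_add_of_summable hsum).congr fun p => ?_
  have hp : (0 : ℝ) ≤ p.1 := Nat.cast_nonneg _
  have h2 := rpow_neg_natCast_mul hp 2 s
  have h3 := rpow_neg_natCast_mul hp 3 s
  have h4 := rpow_neg_natCast_mul hp 4 s
  push_cast at h2 h3 h4
  rw [h2, h3, h4, add_sub_cancel, rank2Numerator]
end

section
/- Let q and t be real numbers with q > 1 and 0 < t < 1/q. For each integer d \ge 1 let S_d = \sum_{(d_1,d_2)} (q^d - 1) q^{d_2 - d_1}, the (finite) sum over pairs of integers with d_1 + d_2 = d and d_1 > d_2 > 0. Then the series \sum_{d=1}^{\infty} S_d t^d / (q-1)^2 converges and equals t^3 (q^2+q+1+q^2 t) / ((q-1)(1-t^2)(1-q^2 t^2)(q-t)). (This is the paper's evaluation of the case-(i) contribution \sum_{(i)} (q^{h^0(V)}-1)/#Aut(V) \cdot t^d of non-semi-stable rank-2 bundles V = L_1 \oplus L_2 of degree d = d_1 + d_2 with d_1 > d_2 > 0, for which h^0(V) = d and #Aut(V) = (q-1)^2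 q^{d_1 - d_2}, up to the overall factor N_1^2.) -/
/-!
Write `d = 2k + 1 + r` with `r ∈ {0, 1}`. The condition `0 < j`, `2j < d` becomes `1 ≤ j ≤ k`, so
`S_d = (q^d - 1) q^{-d} ∑_{j=1}^k q^{2j}` is a geometric sum, and `S_d t^d` is a fixed linear
combination of `(q²t²)^k`, `(t²)^k` and `(t²/q²)^k`. Summing these three geometric series for
each parity and adding the two parities gives the rational function.
-/

open Finset

noncomputable def caseOneCoeff (q : ℝ) (d : ℕ) : ℝ :=
  ∑ j ∈ (Ico 1 d).filter (fun j => 2 * j < d), (q ^ d - 1) / q ^ (d - 2 * j)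

lemma filter_two_mul_lt_eq_Ico {k r : ℕ} (hr : r ≤ 1) :
    (Ico 1 (2 * k + 1 + r)).filter (fun j => 2 * j < 2 * k + 1 + r) = Ico 1 (k + 1) := by
  ext j
  simp only [mem_filter, mem_Ico]
  omega

lemma div_pow_sub_two_mul {K : Type*} [Field K] {q : K} (hq : q ≠ 0) {d j : ℕ} (h : 2 * j ≤ d)
    (a : K) : a / q ^ (d - 2 * j) = a / q ^ d * (q ^ 2) ^ j := by
  rw [pow_sub₀ q hq h, ← pow_mul]
  field_simp

section

variable {q : ℝ}

lemma caseOneCoeff_two_mul_add_one_add (hq0 : q ≠ 0) (hq2 : q ^ 2 ≠ 1) {k r : ℕ} (hr : r ≤ 1) :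
    caseOneCoeff q (2 * k + 1 + r) =
      (q ^ (2 * k + 1 + r) - 1) / q ^ (2 * k + 1 + r) * (((q ^ 2) ^ (k + 1) - q ^ 2) / (q ^ 2 - 1)) := by
  rw [caseOneCoeff, filter_two_mul_lt_eq_Ico hr,
    sum_congr rfl fun j hj => div_pow_sub_two_mul hq0 (by simp only [mem_Ico] at hj; omega) _,
    ← mul_sum, geom_sum_Ico hq2 (by omega), pow_one]

lemma caseOneCoeff_mul_pow_eq_geom (hq0 : q ≠ 0) (hq2 : q ^ 2 ≠ 1) (t : ℝ) {k r : ℕ} (hr : r ≤ 1) :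
    caseOneCoeff q (2 * k + 1 + r) * t ^ (2 * k + 1 + r) =
      q * t ^ (1 + r) / (q ^ r * (q ^ 2 - 1)) *
        (q ^ (1 + r) * (q ^ 2 * t ^ 2) ^ k - (q ^ (1 + r) + 1) * (t ^ 2) ^ k + (t ^ 2 / q ^ 2) ^ k) := by
  have hq21 : q ^ 2 - 1 ≠ 0 := sub_ne_zero.mpr hq2
  have hqd : q ^ (2 * k + 1 + r) = (q ^ 2) ^ k * q ^ (1 + r) := by ring
  have htd : t ^ (2 * k + 1 + r) = (t ^ 2) ^ k * t ^ (1 + r) := by ring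
  rw [caseOneCoeff_two_mul_add_one_add hq0 hq2 hr, hqd, htd, mul_pow, div_pow, pow_succ (q ^ 2)]
  have hqk : (q ^ 2) ^ k ≠ 0 := by positivity
  generalize (q ^ 2) ^ k = a at hqk ⊢
  field_simp
  ring

lemma hasSum_caseOneCoeff_mul_pow (hq : 1 < q) {t : ℝ} (hqt : |q * t| < 1) {r : ℕ} (hr : r ≤ 1) :
    HasSum (fun k : ℕ => caseOneCoeff q (2 * k + 1 + r) * t ^ (2 * k + 1 + r))
      (q * t ^ (1 + r) / (q ^ r * (q ^ 2 - 1)) *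
        (q ^ (1 + r) * (1 - q ^ 2 * t ^ 2)⁻¹ - (q ^ (1 + r) + 1) * (1 - t ^ 2)⁻¹ +
          (1 - t ^ 2 / q ^ 2)⁻¹)) := by
  have hq0 : 0 < q := by positivity
  have ht : |t| < 1 := by
    rw [abs_mul, abs_of_pos hq0] at hqt
    nlinarith [abs_nonneg t]
  have htq : |t / q| < 1 := by
    rw [abs_div, abs_of_pos hq0, div_lt_one hq0]
    linarith
  have hgeom {x : ℝ} (hx : |x| < 1) : HasSum (fun k : ℕ => (x ^ 2) ^ k) (1 - x ^ 2)⁻¹ :=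
    hasSum_geometric_of_abs_lt_one (by rw [abs_pow]; exact pow_lt_one₀ (abs_nonneg x) hx two_ne_zero)
  have H := (((hgeom hqt).mul_left (q ^ (1 + r))).sub ((hgeom ht).mul_left (q ^ (1 + r) + 1))).add
    (hgeom htq) |>.mul_left (q * t ^ (1 + r) / (q ^ r * (q ^ 2 - 1)))
  rw [mul_pow, div_pow] at H
  exact H.congr_fun fun k => caseOneCoeff_mul_pow_eq_geom hq0.ne' (by nlinarith) t hr

end

open Finset in
/-- Case (i), positive degree: with S_d = ∑_{d₁+d₂=d, d₁>d₂>0} (q^d - 1) q^{d₂-d₁}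
(here d₁ = d - j, d₂ = j with 0 < j and 2j < d, so q^{d₂-d₁} = 1/q^{d-2j}),
∑_{d≥1} S_d t^d/(q-1)² = t³(q²+q+1+q²t)/((q-1)(1-t²)(1-q²t²)(q-t)). -/
theorem stmt_9 (q t : ℝ) (hq : 1 < q) (ht0 : 0 < t) (ht : t < 1 / q)
    (S : ℕ → ℝ)
    (hS : ∀ d : ℕ, S d =
      ∑ j ∈ (Finset.Ico 1 d).filter (fun j => 2 * j < d), (q ^ d - 1) / q ^ (d - 2 * j)) :
    HasSum (fun d : ℕ => S (d + 1) * t ^ (d + 1) / (q - 1) ^ 2)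
      (t ^ 3 * (q ^ 2 + q + 1 + q ^ 2 * t) /
        ((q - 1) * (1 - t ^ 2) * (1 - q ^ 2 * t ^ 2) * (q - t))) := by
  obtain rfl : S = caseOneCoeff q := funext hS
  have hq0 : 0 < q := by positivity
  have hqt : q * t < 1 := by rwa [lt_div_iff₀ hq0, mul_comm] at ht
  have habs : |q * t| < 1 := by rwa [abs_of_pos (by positivity)]
  have heven := (hasSum_caseOneCoeff_mul_pow hq habs (r := 0) zero_le_one).div_const ((q - 1) ^ 2)
  have hodd := (hasSum_caseOneCoeff_mul_pow hq habs (r := 1) le_rfl).div_const ((q - 1) ^ 2)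
  simp only [add_zero] at heven
  -- `M := ℝ` makes the instance path agree with the goal's, so `convert` leaves only the sum.
  convert HasSum.even_add_odd (M := ℝ) (f := fun d => caseOneCoeff q (d + 1) * t ^ (d + 1) / (q - 1) ^ 2)
    heven hodd using 1
  have : 1 - t ^ 2 ≠ 0 := by nlinarith
  have : 1 - t ^ 2 * q ^ 2 ≠ 0 := by nlinarith [mul_pos hq0 ht0]
  have : q ^ 2 - t ^ 2 ≠ 0 := by nlinarith
  have : q - t ≠ 0 := by nlinarith
  have : q - 1 ≠ 0 := by linarith
  have : q ^ 2 - 1 ≠ 0 := by nlinarith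
  field_simp
  ring
end

section
/- Let q and t be real numbers with q > 1 and 0 < t < 1. For each integer d \ge 1 let S_d = \sum_{k=1}^{\infty} (q^{d+k} - 1) q^{-(d+2k)} (the sum over pairs d_1 = d + k > 0 > d_2 = -k with d_1 + d_2 = d, each term being (q^{d_1}-1) q^{d_2 - d_1}); each S_d converges. Then \sum_{d=1}^{\infty} S_d t^d / (q-1)^2 converges and equals t/((q-1)^2 (q^2-1)) \cdot (q^2+q-1-q t)/((1-t)(q-t)). (This is the paper's evaluation, up to the overall factor N_1^2, of the case-(iii) contribution of the non-semi-stable rank-2 bundles V = L_1 \oplus L_2 of degree d \ge 1 with deg L_1 = d_1 > 0 > d_2 = deg L_2, for which h^0(V) = d_1 and #Aut(V) = (q-1)^2 q^{d_1 - d_2}.) -/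
/-! Expanding the numerator splits `S_d` into two geometric series, in `q⁻¹` and in `q⁻²`, so
`S_d = 1/(q-1) - q^{-d}/(q²-1)`. The generating series over `d ≥ 1` is then again a difference of
two geometric series, in `t` and in `t/q`. -/

theorem hasSum_pow_succ_of_norm_lt_one {K : Type*} [NormedField K] [CompleteSpace K] {r : K}
    (h : ‖r‖ < 1) : HasSum (fun n : ℕ => r ^ (n + 1)) (r / (1 - r)) := by
  simpa [pow_succ', div_eq_mul_inv] using (hasSum_geometric_of_norm_lt_one h).mul_left r

theorem hasSum_pow_sub_one_div_pow {q : ℝ} (hq : 1 < q) (d : ℕ) :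
    HasSum (fun k : ℕ => (q ^ (d + (k + 1)) - 1) / q ^ (d + 2 * (k + 1)))
      (1 / (q - 1) - (q ^ d)⁻¹ / (q ^ 2 - 1)) := by
  have hq0 : 0 < q := by linarith
  have hinv : ‖q⁻¹‖ < 1 := by
    rw [norm_inv, Real.norm_of_nonneg hq0.le]; exact inv_lt_one_of_one_lt₀ hq
  have hinv2 : ‖q⁻¹ ^ 2‖ < 1 := by
    rw [norm_pow]; exact pow_lt_one₀ (norm_nonneg _) hinv two_ne_zero
  have hsum := (hasSum_pow_succ_of_norm_lt_one hinv).sub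
    ((hasSum_pow_succ_of_norm_lt_one hinv2).mul_left (q ^ d)⁻¹)
  have hq1 : q - 1 ≠ 0 := by linarith
  have hq2 : q ^ 2 - 1 ≠ 0 := by nlinarith
  have hvalue : 1 / (q - 1) - (q ^ d)⁻¹ / (q ^ 2 - 1)
      = q⁻¹ / (1 - q⁻¹) - (q ^ d)⁻¹ * (q⁻¹ ^ 2 / (1 - q⁻¹ ^ 2)) := by
    field_simp
  rw [hvalue]
  refine hsum.congr_fun fun k => ?_
  simp only [inv_pow, ← pow_mul, pow_add]
  field_simp
  ring

/-- Case (iii), positive degree: with S_d = ∑_{k≥1} (q^{d+k} - 1) q^{-(d+2k)} (the sum over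
d₁ = d+k > 0 > d₂ = -k with d₁+d₂ = d of (q^{d₁}-1) q^{d₂-d₁}), each S_d converges and
∑_{d≥1} S_d t^d/(q-1)² = t/((q-1)²(q²-1)) · (q²+q-1-qt)/((1-t)(q-t)). -/
theorem stmt_12 (q t : ℝ) (hq : 1 < q) (ht0 : 0 < t) (ht : t < 1) :
    (∀ d : ℕ, 1 ≤ d →
        Summable fun k : ℕ => (q ^ (d + (k + 1)) - 1) / q ^ (d + 2 * (k + 1))) ∧
      HasSum
        (fun d : ℕ =>
          (∑' k : ℕ, (q ^ ((d + 1) + (k + 1)) - 1) / q ^ ((d + 1) + 2 * (k + 1))) *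
            t ^ (d + 1) / (q - 1) ^ 2)
        (t / ((q - 1) ^ 2 * (q ^ 2 - 1)) * ((q ^ 2 + q - 1 - q * t) / ((1 - t) * (q - t)))) := by
  refine ⟨fun d _ => (hasSum_pow_sub_one_div_pow hq d).summable, ?_⟩
  have hq0 : 0 < q := by linarith
  have ht_norm : ‖t‖ < 1 := by rwa [Real.norm_of_nonneg ht0.le]
  have htq_norm : ‖t / q‖ < 1 := by
    rw [Real.norm_of_nonneg (by positivity), div_lt_one hq0]; linarith
  have hsum := ((hasSum_pow_succ_of_norm_lt_one ht_norm).mul_left ((q - 1) ^ 3)⁻¹).sub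
    ((hasSum_pow_succ_of_norm_lt_one htq_norm).mul_left ((q - 1) ^ 2 * (q ^ 2 - 1))⁻¹)
  have hq1 : q - 1 ≠ 0 := by linarith
  have hq2 : q ^ 2 - 1 ≠ 0 := by nlinarith
  have ht1 : 1 - t ≠ 0 := by linarith
  have hqt : q - t ≠ 0 := by linarith
  have hvalue : t / ((q - 1) ^ 2 * (q ^ 2 - 1)) * ((q ^ 2 + q - 1 - q * t) / ((1 - t) * (q - t)))
      = ((q - 1) ^ 3)⁻¹ * (t / (1 - t)) - ((q - 1) ^ 2 * (q ^ 2 - 1))⁻¹ * (t / q / (1 - t / q)) := by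
    field_simp
    ring
  rw [hvalue]
  refine hsum.congr_fun fun d => ?_
  rw [(hasSum_pow_sub_one_div_pow hq (d + 1)).tsum_eq, div_pow]
  field_simp
end
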